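/- Let P be an F-program and (I,J) its ID-well-founded model. Then for every I' ⊆ I, the ID-stable operator of the simplified program satisfies S_{P^{I,J}}(I') = J; and for every J' ⊇ J, S_{P^{I,J}}(J') = S_P(J'). -/

import Mathlib

inductive Formula (α : Type) : Type 1
  | atom : α → Formula α
  | conj : {ι : Type} → (ι → Formula α) → Formula α
  | disj : {ι : Type} → (ι → Formula α) → Formula α
  | impl : Formula α → Formula α → Formula α

namespace Formula

def fbot {α : Type} : Formula α := .disj (fun i : Empty => i.elim)
def ftop {α : Type} : Formula α := .conj (fun i : Empty => i.elim)

def Sat {α : Type} (I : Set α) : Formula α → Prop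
  | .atom a => a ∈ I
  | .conj f => ∀ i, Sat I (f i)
  | .disj f => ∃ i, Sat I (f i)
  | .impl F G => Sat I F → Sat I G

open Classical in
noncomputable def reduct {α : Type} (I : Set α) : Bool → Formula α → Formula α
  | true, .atom a => .atom a
  | false, .atom a => if a ∈ I then ftop else fbot
  | pol, .conj f => .conj (fun i => reduct I pol (f i))
  | pol, .disj f => .disj (fun i => reduct I pol (f i))
  | true, .impl F G => .impl (reduct I false F) (reduct I true G)
  | false, .impl F G => .impl (reduct I true F) (reduct I false G)

def atomsPol {α : Type} : Bool → Formula α → Set α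
  | true, .atom a => {a}
  | false, .atom _ => ∅
  | pol, .conj f => ⋃ i, atomsPol pol (f i)
  | pol, .disj f => ⋃ i, atomsPol pol (f i)
  | pol, .impl F G => atomsPol (!pol) F ∪ atomsPol pol G

def Positive {α : Type} (F : Formula α) : Prop := atomsPol false F = ∅

open Classical in
noncomputable def freduct {α : Type} (X : Set α) : Formula α → Formula α
  | .atom a => if a ∈ X then .atom a else fbot
  | .conj f => if Sat X (.conj f) then .conj (fun i => freduct X (f i)) else fbot
  | .disj f => if Sat X (.disj f) then .disj (fun i => freduct X (f i)) else fbot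
  | .impl F G => if Sat X (.impl F G) then .impl (freduct X F) (freduct X G) else fbot

def noImpl {α : Type} : Formula α → Prop
  | .atom _ => True
  | .conj f => ∀ i, noImpl (f i)
  | .disj f => ∀ i, noImpl (f i)
  | .impl _ _ => False

def inR {α : Type} : Formula α → Prop
  | .atom _ => True
  | .conj f => ∀ i, inR (f i)
  | .disj f => ∀ i, inR (f i)
  | .impl F G => noImpl F ∧ inR G

end Formula

open Formula

structure Rule (α : Type) : Type 1 where
  head : α
  body : Formula α

abbrev Program (α : Type) := Set (Rule α)

def Tstep {α : Type} (P : Program α) (X : Set α) : Set α :=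
  {a | ∃ r ∈ P, r.head = a ∧ Sat X r.body}

noncomputable def progReduct {α : Type} (P : Program α) (I : Set α) : Program α :=
  (fun r => ⟨r.head, reduct I true r.body⟩) '' P

noncomputable def stableOp {α : Type} (P : Program α) (I : Set α) : Set α :=
  ⋂₀ {X | Tstep (progReduct P I) X ⊆ X}

def precLe {α : Type} (p q : Set α × Set α) : Prop := p.1 ⊆ q.1 ∧ q.2 ⊆ p.2

noncomputable def wfOp {α : Type} (P : Program α) (p : Set α × Set α) : Set α × Set α :=
  (stableOp P p.2, stableOp P p.1)

noncomputable def IsWFModel {α : Type} (P : Program α) (p : Set α × Set α) : Prop :=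
  wfOp P p = p ∧ ∀ q, wfOp P q = q → precLe p q

def IsModel {α : Type} (P : Program α) (X : Set α) : Prop :=
  ∀ r ∈ P, Sat X r.body → r.head ∈ X

noncomputable def freductProg {α : Type} (P : Program α) (X : Set α) : Program α :=
  (fun r => ⟨r.head, freduct X r.body⟩) '' P

noncomputable def StableModel {α : Type} (P : Program α) (X : Set α) : Prop :=
  IsModel (freductProg P X) X ∧ ∀ Y, IsModel (freductProg P X) Y → Y ⊆ X → Y = X

noncomputable def simpProg {α : Type} (P : Program α) (I J : Set α) : Program α :=
  {r | r ∈ P ∧ Sat J (reduct I true r.body)}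

noncomputable def relStable {α : Type} (P : Program α) (Ir J : Set α) : Set α :=
  ⋂₀ {X | Tstep (progReduct P J) (Ir ∪ X) ⊆ X}

noncomputable def relWF {α : Type} (P : Program α) (r p : Set α × Set α) : Set α × Set α :=
  (relStable P r.1 (p.2 ∪ r.2), relStable P r.2 (p.1 ∪ r.1))

/-! The body reduct is monotone in the interpretation and antitone in the parameter, so least
models of reducts can be compared rule by rule. A rule survives the simplification exactly when its
`I`-reduct holds in `J = S_P(I)`; hence `J` stays closed under the simplified rules for every
parameter, while every rule of `P` that fires below `S_P(I) = J`, or below `S_P(J') ⊆ S_P(J) = I ⊆ J`,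
survives. -/

namespace Formula

variable {α : Type}

theorem sat_ftop (X : Set α) : Sat X (ftop : Formula α) := fun i => i.elim

theorem not_sat_fbot (X : Set α) : ¬ Sat X (fbot : Formula α) := fun ⟨i, _⟩ => i.elim

theorem sat_reduct_false_atom {K X : Set α} {a : α} :
    Sat X (reduct K false (atom a)) ↔ a ∈ K := by
  by_cases ha : a ∈ K
  · simpa [reduct, ha] using sat_ftop X
  · simpa [reduct, ha] using not_sat_fbot X

/-- The two polarities have to be proved together, since `impl` swaps them. -/
theorem sat_reduct_monotone (F : Formula α) {K K' X Y : Set α} (hK : K' ⊆ K) (hXY : X ⊆ Y) :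
    (Sat X (reduct K true F) → Sat Y (reduct K' true F)) ∧
      (Sat Y (reduct K' false F) → Sat X (reduct K false F)) := by
  induction F with
  | atom a =>
    simp only [sat_reduct_false_atom]
    exact ⟨fun h => hXY h, fun h => hK h⟩
  | conj f ih => exact ⟨fun h i => (ih i).1 (h i), fun h i => (ih i).2 (h i)⟩
  | disj f ih => exact ⟨fun ⟨i, h⟩ => ⟨i, (ih i).1 h⟩, fun ⟨i, h⟩ => ⟨i, (ih i).2 h⟩⟩
  | impl F G ihF ihG => exact ⟨fun h hF => ihG.1 (h (ihF.2 hF)), fun h hF => ihG.2 (h (ihF.1 hF))⟩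

theorem sat_reduct_mono {F : Formula α} {K K' X Y : Set α} (hK : K' ⊆ K) (hXY : X ⊆ Y)
    (h : Sat X (reduct K true F)) : Sat Y (reduct K' true F) :=
  (sat_reduct_monotone F hK hXY).1 h

end Formula

section StableOp

variable {α : Type}

theorem mem_tstep_progReduct {P : Program α} {K X : Set α} {a : α} :
    a ∈ Tstep (progReduct P K) X ↔ ∃ r ∈ P, r.head = a ∧ Sat X (reduct K true r.body) := by
  constructor
  · rintro ⟨_, ⟨r, hr, rfl⟩, rfl, hsat⟩
    exact ⟨r, hr, rfl, hsat⟩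
  · rintro ⟨r, hr, rfl, hsat⟩
    exact ⟨_, ⟨r, hr, rfl⟩, rfl, hsat⟩

theorem stableOp_subset_of_tstep_subset {P : Program α} {K X : Set α}
    (hX : Tstep (progReduct P K) X ⊆ X) : stableOp P K ⊆ X :=
  Set.sInter_subset_of_mem hX

theorem tstep_stableOp_subset (P : Program α) (K : Set α) :
    Tstep (progReduct P K) (stableOp P K) ⊆ stableOp P K := by
  intro a ha
  obtain ⟨r, hr, rfl, hsat⟩ := mem_tstep_progReduct.1 ha
  refine Set.mem_sInter.2 fun X hX => hX (mem_tstep_progReduct.2 ⟨r, hr, rfl, ?_⟩)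
  exact sat_reduct_mono subset_rfl (stableOp_subset_of_tstep_subset hX) hsat

/-- To compare least models it suffices to transfer the rules that can fire below `stableOp P K`:
`stableOp P K ∩ stableOp Q K'` is then closed under the `P^K` step. -/
theorem stableOp_subset_stableOp {P Q : Program α} {K K' : Set α}
    (h : ∀ r ∈ P, ∀ X ⊆ stableOp P K, Sat X (reduct K true r.body) →
      r ∈ Q ∧ Sat X (reduct K' true r.body)) :
    stableOp P K ⊆ stableOp Q K' := by
  have hclosed : Tstep (progReduct P K) (stableOp P K ∩ stableOp Q K') ⊆
      stableOp P K ∩ stableOp Q K' := by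
    intro a ha
    obtain ⟨r, hr, rfl, hsat⟩ := mem_tstep_progReduct.1 ha
    obtain ⟨hrQ, hsat'⟩ := h r hr _ Set.inter_subset_left hsat
    exact ⟨tstep_stableOp_subset P K <| mem_tstep_progReduct.2
        ⟨r, hr, rfl, sat_reduct_mono subset_rfl Set.inter_subset_left hsat⟩,
      tstep_stableOp_subset Q K' <| mem_tstep_progReduct.2
        ⟨r, hrQ, rfl, sat_reduct_mono subset_rfl Set.inter_subset_right hsat'⟩⟩
  exact (stableOp_subset_of_tstep_subset hclosed).trans Set.inter_subset_right

theorem stableOp_anti {P : Program α} {K K' : Set α} (hK : K ⊆ K') :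
    stableOp P K' ⊆ stableOp P K :=
  stableOp_subset_stableOp fun _ hr _ _ hsat => ⟨hr, sat_reduct_mono hK subset_rfl hsat⟩

theorem stableOp_mono_of_subset {P Q : Program α} {K : Set α} (hPQ : P ⊆ Q) :
    stableOp P K ⊆ stableOp Q K :=
  stableOp_subset_stableOp fun _ hr _ _ hsat => ⟨hPQ hr, hsat⟩

theorem simpProg_subset (P : Program α) (I J : Set α) : simpProg P I J ⊆ P :=
  fun _ hr => hr.1

theorem tstep_progReduct_simpProg_subset (P : Program α) (I J K X : Set α) :
    Tstep (progReduct (simpProg P I J) K) X ⊆ Tstep (progReduct P I) J := by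
  intro a ha
  obtain ⟨r, ⟨hrP, hrJ⟩, rfl, -⟩ := mem_tstep_progReduct.1 ha
  exact mem_tstep_progReduct.2 ⟨r, hrP, rfl, hrJ⟩

end StableOp

namespace IsWFModel

variable {α : Type} {P : Program α} {I J : Set α}

theorem stableOp_snd (hWF : IsWFModel P (I, J)) : stableOp P J = I :=
  congrArg Prod.fst hWF.1

theorem stableOp_fst (hWF : IsWFModel P (I, J)) : stableOp P I = J :=
  congrArg Prod.snd hWF.1

/-- `(J, I)` is a fixed point as well, and `(I, J)` is below it in the precision order. -/
theorem fst_subset_snd (hWF : IsWFModel P (I, J)) : I ⊆ J := by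
  have hswap : wfOp P (J, I) = (J, I) := by
    simp only [wfOp, hWF.stableOp_snd, hWF.stableOp_fst]
  exact (hWF.2 (J, I) hswap).1

end IsWFModel

/-- Stable-operator properties of the simplification w.r.t. the well-founded model. -/
theorem stmt13 {α : Type} (P : Program α) (I J : Set α)
    (hWF : IsWFModel P (I, J)) :
    (∀ I' : Set α, I' ⊆ I → stableOp (simpProg P I J) I' = J) ∧
    (∀ J' : Set α, J ⊆ J' → stableOp (simpProg P I J) J' = stableOp P J') := by
  have hI := hWF.stableOp_snd
  have hJ := hWF.stableOp_fst
  have hJpre : Tstep (progReduct P I) J ⊆ J := hJ ▸ tstep_stableOp_subset P I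
  refine ⟨fun I' hI' => subset_antisymm ?_ ?_, fun J' hJ' => subset_antisymm ?_ ?_⟩
  · exact stableOp_subset_of_tstep_subset
      ((tstep_progReduct_simpProg_subset P I J I' J).trans hJpre)
  · calc J = stableOp P I := hJ.symm
      _ ⊆ stableOp (simpProg P I J) I' := stableOp_subset_stableOp fun r hr X hX hsat =>
          ⟨⟨hr, sat_reduct_mono subset_rfl (hJ ▸ hX) hsat⟩, sat_reduct_mono hI' subset_rfl hsat⟩
  · exact stableOp_mono_of_subset (simpProg_subset P I J)
  · have hsub : stableOp P J' ⊆ J := (stableOp_anti hJ').trans (hI.subset.trans hWF.fst_subset_snd)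
    exact stableOp_subset_stableOp fun r hr X hX hsat =>
      ⟨⟨hr, sat_reduct_mono (hWF.fst_subset_snd.trans hJ') (hX.trans hsub) hsat⟩, hsat⟩
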